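/- For |q|<1 and |xt|<1, the Al-Salam-Carlitz polynomials satisfy the generating function identity \sum_{n=0}^\infty U_n(x,y,a;q) t^n/(q;q)_n = (at;q)_\infty (yt;q)_\infty / (xt;q)_\infty. -/

import Mathlib

open Finset

noncomputable def qPoch (q a : ℂ) (n : ℕ) : ℂ := ∏ j ∈ Finset.range n, (1 - a * q ^ j)

noncomputable def qPochInf (q a : ℂ) : ℂ := ∏' j : ℕ, (1 - a * q ^ j)

noncomputable def qBinom (q : ℂ) (n k : ℕ) : ℂ := qPoch q q n / (qPoch q q (n - k) * qPoch q q k)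

noncomputable def cauchyP (q x y : ℂ) (n : ℕ) : ℂ := ∏ j ∈ Finset.range n, (x - q ^ j * y)

noncomputable def ascU (q x y a : ℂ) (n : ℕ) : ℂ :=
  ∑ k ∈ Finset.range (n + 1), qBinom q n k * (-1) ^ k * q ^ Nat.choose k 2 * a ^ k * cauchyP q x y (n - k)

/-!
The Cauchy generating function `F(t) = ∑ Pₙ(x,y) tⁿ/(q;q)ₙ` satisfies
`(1 - xt) F(t) = (1 - yt) F(qt)`. Iterating, `(xt;q)ₙ F(t) = (yt;q)ₙ F(qⁿt)`, and since
`F(qⁿt) → F(0) = 1` this gives `F(t) = (yt;q)_∞ / (xt;q)_∞`. As `Pₖ(0,a) = (-1)ᵏ q^(k choose 2) aᵏ`,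
the series `∑ Uₙ tⁿ/(q;q)ₙ` is the Cauchy product of the generating functions of `Pₖ(0,a)` and
`Pₖ(x,y)`, hence equals `(at;q)_∞ · (yt;q)_∞ / (xt;q)_∞`.
-/

open Filter Topology

lemma summable_norm_of_succ_eq_mul {R : Type*} [NormedRing R] {a r : ℕ → R} {L : ℝ}
    (hL : L < 1) (ha : ∀ n, a (n + 1) = a n * r n)
    (hr : Tendsto (fun n => ‖r n‖) atTop (𝓝 L)) : Summable fun n => ‖a n‖ := by
  obtain ⟨ρ, hLρ, hρ⟩ := exists_between hL
  refine summable_of_ratio_norm_eventually_le hρ ?_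
  filter_upwards [hr.eventually_le_const hLρ] with n hn
  rw [norm_norm, norm_norm, ha, mul_comm ρ]
  exact (norm_mul_le _ _).trans (mul_le_mul_of_nonneg_left hn (norm_nonneg _))

lemma one_sub_ne_zero_of_norm_lt_one {R : Type*} [NormedRing R] [NormOneClass R] {w : R}
    (hw : ‖w‖ < 1) : 1 - w ≠ 0 := by
  rw [sub_ne_zero]
  rintro rfl
  simp at hw

lemma norm_mul_pow_lt_one {q w : ℂ} (hq : ‖q‖ < 1) (hw : ‖w‖ < 1) (n : ℕ) :
    ‖w * q ^ n‖ < 1 := by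
  rw [norm_mul, norm_pow]
  exact lt_of_le_of_lt (mul_le_of_le_one_right (norm_nonneg w)
    (pow_le_one₀ (norm_nonneg q) hq.le)) hw

lemma qPoch_succ (q a : ℂ) (n : ℕ) : qPoch q a (n + 1) = qPoch q a n * (1 - a * q ^ n) :=
  prod_range_succ _ _

lemma cauchyP_succ (q x y : ℂ) (n : ℕ) :
    cauchyP q x y (n + 1) = cauchyP q x y n * (x - q ^ n * y) :=
  prod_range_succ _ _

lemma cauchyP_zero_left (q a : ℂ) (k : ℕ) :
    cauchyP q 0 a k = (-1) ^ k * q ^ k.choose 2 * a ^ k := by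
  induction k with
  | zero => simp [cauchyP]
  | succ k ih =>
    rw [cauchyP_succ, ih, Nat.choose_succ_succ', Nat.choose_one_right]
    ring

lemma qPoch_self_ne_zero {q : ℂ} (hq : ‖q‖ < 1) (n : ℕ) : qPoch q q n ≠ 0 :=
  prod_ne_zero_iff.mpr fun j _ => one_sub_ne_zero_of_norm_lt_one (norm_mul_pow_lt_one hq hq j)

lemma summable_norm_neg_mul_pow {q : ℂ} (hq : ‖q‖ < 1) (a : ℂ) :
    Summable fun j : ℕ => ‖-(a * q ^ j)‖ := by
  simpa using (summable_geometric_of_lt_one (norm_nonneg q) hq).mul_left ‖a‖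

lemma multipliable_one_sub_mul_pow {q : ℂ} (hq : ‖q‖ < 1) (a : ℂ) :
    Multipliable fun j : ℕ => 1 - a * q ^ j := by
  simpa [sub_eq_add_neg] using multipliable_one_add_of_summable (summable_norm_neg_mul_pow hq a)

lemma tendsto_qPoch_qPochInf {q : ℂ} (hq : ‖q‖ < 1) (a : ℂ) :
    Tendsto (qPoch q a) atTop (𝓝 (qPochInf q a)) :=
  (multipliable_one_sub_mul_pow hq a).hasProd.tendsto_prod_nat

lemma qPochInf_ne_zero {q a : ℂ} (hq : ‖q‖ < 1) (ha : ‖a‖ < 1) : qPochInf q a ≠ 0 := by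
  simpa [qPochInf, sub_eq_add_neg] using tprod_one_add_ne_zero_of_summable
    (fun j => by simpa [sub_eq_add_neg] using
      one_sub_ne_zero_of_norm_lt_one (norm_mul_pow_lt_one hq ha j))
    (summable_norm_neg_mul_pow hq a)

noncomputable def cauchyGenTerm (q x y t : ℂ) (n : ℕ) : ℂ := cauchyP q x y n * t ^ n / qPoch q q n

noncomputable def cauchyGen (q x y t : ℂ) : ℂ := ∑' n, cauchyGenTerm q x y t n

lemma cauchyGenTerm_zero (q x y t : ℂ) : cauchyGenTerm q x y t 0 = 1 := by
  simp [cauchyGenTerm, cauchyP, qPoch]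

lemma cauchyGenTerm_mul (q x y w t : ℂ) (n : ℕ) :
    cauchyGenTerm q x y (w * t) n = cauchyGenTerm q x y t n * w ^ n := by
  rw [cauchyGenTerm, cauchyGenTerm, mul_pow]
  ring

lemma cauchyGenTerm_succ {q : ℂ} (hq : ‖q‖ < 1) (x y t : ℂ) (n : ℕ) :
    cauchyGenTerm q x y t (n + 1) =
      cauchyGenTerm q x y t n * ((x - q ^ n * y) * t / (1 - q * q ^ n)) := by
  have hn := qPoch_self_ne_zero hq n
  have hn' := one_sub_ne_zero_of_norm_lt_one (norm_mul_pow_lt_one hq hq n)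
  rw [cauchyGenTerm, cauchyGenTerm, cauchyP_succ, qPoch_succ]
  field_simp
  ring

lemma cauchyGenTerm_succ_sub {q : ℂ} (hq : ‖q‖ < 1) (x y z : ℂ) (n : ℕ) :
    cauchyGenTerm q x y z (n + 1) - cauchyGenTerm q x y (q * z) (n + 1) =
      x * z * cauchyGenTerm q x y z n - y * z * cauchyGenTerm q x y (q * z) n := by
  have hn := qPoch_self_ne_zero hq n
  have hn' := one_sub_ne_zero_of_norm_lt_one (norm_mul_pow_lt_one hq hq n)
  rw [cauchyGenTerm_mul, cauchyGenTerm_mul, cauchyGenTerm, cauchyGenTerm, cauchyP_succ, qPoch_succ,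
    pow_succ' q]
  rw [mul_comm q] at hn' ⊢
  field_simp
  ring

lemma summable_norm_cauchyGenTerm {q x t : ℂ} (hq : ‖q‖ < 1) (hxt : ‖x * t‖ < 1) (y : ℂ) :
    Summable fun n => ‖cauchyGenTerm q x y t n‖ := by
  refine summable_norm_of_succ_eq_mul hxt (cauchyGenTerm_succ hq x y t) ?_
  have hqn : Tendsto (fun n : ℕ => q ^ n) atTop (𝓝 0) :=
    tendsto_pow_atTop_nhds_zero_of_norm_lt_one hq
  have := (((hqn.mul_const y).const_sub x).mul_const t).div ((hqn.const_mul q).const_sub 1)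
    (by simp)
  simpa using this.norm

lemma cauchyGen_functional_eq {q x z : ℂ} (hq : ‖q‖ < 1) (hxz : ‖x * z‖ < 1) (y : ℂ) :
    (1 - x * z) * cauchyGen q x y z = (1 - y * z) * cauchyGen q x y (q * z) := by
  have hxqz : ‖x * (q * z)‖ < 1 := by
    simpa [mul_left_comm, mul_comm] using norm_mul_pow_lt_one hq hxz 1
  have hz := (summable_norm_cauchyGenTerm hq hxz y).of_norm
  have hqz := (summable_norm_cauchyGenTerm hq hxqz y).of_norm
  have hdiff : cauchyGen q x y z - cauchyGen q x y (q * z) =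
      x * z * cauchyGen q x y z - y * z * cauchyGen q x y (q * z) := by
    rw [cauchyGen, cauchyGen, ← hz.tsum_sub hqz, (hz.sub hqz).tsum_eq_zero_add,
      ← tsum_mul_left, ← tsum_mul_left, ← (hz.mul_left _).tsum_sub (hqz.mul_left _)]
    simp only [cauchyGenTerm_zero, sub_self, zero_add, cauchyGenTerm_succ_sub hq]
  linear_combination hdiff

lemma qPoch_mul_cauchyGen {q x t : ℂ} (hq : ‖q‖ < 1) (hxt : ‖x * t‖ < 1) (y : ℂ) (n : ℕ) :
    qPoch q (x * t) n * cauchyGen q x y t = qPoch q (y * t) n * cauchyGen q x y (q ^ n * t) := by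
  induction n with
  | zero => simp [qPoch]
  | succ n ih =>
    have hxqt : ‖x * (q ^ n * t)‖ < 1 := by
      simpa [mul_left_comm, mul_comm] using norm_mul_pow_lt_one hq hxt n
    have hfun := cauchyGen_functional_eq hq hxqt y
    rw [← mul_assoc q, ← pow_succ'] at hfun
    rw [qPoch_succ, qPoch_succ]
    linear_combination (1 - x * t * q ^ n) * ih + qPoch q (y * t) n * hfun

lemma tendsto_cauchyGen_pow_mul {q x t : ℂ} (hq : ‖q‖ < 1) (hxt : ‖x * t‖ < 1) (y : ℂ) :
    Tendsto (fun n => cauchyGen q x y (q ^ n * t)) atTop (𝓝 1) := by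
  have hlim : Tendsto (fun n => cauchyGen q x y (q ^ n * t)) atTop
      (𝓝 (∑' k, cauchyGenTerm q x y t k * 0 ^ k)) := by
    refine tendsto_tsum_of_dominated_convergence (summable_norm_cauchyGenTerm hq hxt y)
      (fun k => ?_) (Eventually.of_forall fun n k => ?_)
    · simp only [cauchyGenTerm_mul]
      exact ((tendsto_pow_atTop_nhds_zero_of_norm_lt_one hq).pow k).const_mul _
    · rw [cauchyGenTerm_mul, norm_mul, norm_pow, norm_pow]
      exact mul_le_of_le_one_right (norm_nonneg _)
        (pow_le_one₀ (by positivity) (pow_le_one₀ (norm_nonneg q) hq.le))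
  rwa [tsum_eq_single 0 (fun k hk => by simp [hk]), pow_zero, mul_one,
    cauchyGenTerm_zero] at hlim

lemma cauchyGen_eq {q x t : ℂ} (hq : ‖q‖ < 1) (hxt : ‖x * t‖ < 1) (y : ℂ) :
    cauchyGen q x y t = qPochInf q (y * t) / qPochInf q (x * t) := by
  have hlim : Tendsto (fun n => qPoch q (x * t) n * cauchyGen q x y t) atTop
      (𝓝 (qPochInf q (y * t) * 1)) := by
    simpa only [qPoch_mul_cauchyGen hq hxt y] using
      (tendsto_qPoch_qPochInf hq (y * t)).mul (tendsto_cauchyGen_pow_mul hq hxt y)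
  rw [eq_div_iff (qPochInf_ne_zero hq hxt), mul_comm, ← mul_one (qPochInf q (y * t))]
  exact tendsto_nhds_unique ((tendsto_qPoch_qPochInf hq (x * t)).mul_const _) hlim

lemma cauchyGen_zero_left {q : ℂ} (hq : ‖q‖ < 1) (a t : ℂ) :
    cauchyGen q 0 a t = qPochInf q (a * t) := by
  rw [cauchyGen_eq hq (by simp), zero_mul]
  simp [qPochInf]

lemma ascU_mul_pow_div {q : ℂ} (hq : ‖q‖ < 1) (x y a t : ℂ) (n : ℕ) :
    ascU q x y a n * t ^ n / qPoch q q n =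
      ∑ k ∈ range (n + 1), cauchyGenTerm q 0 a t k * cauchyGenTerm q x y t (n - k) := by
  rw [ascU, sum_mul, sum_div]
  refine sum_congr rfl fun k hk_mem => ?_
  have hkn : k ≤ n := Nat.lt_succ_iff.mp (mem_range.mp hk_mem)
  have hn := qPoch_self_ne_zero hq n
  have hk := qPoch_self_ne_zero hq k
  have hnk := qPoch_self_ne_zero hq (n - k)
  rw [cauchyGenTerm, cauchyGenTerm, cauchyP_zero_left, qBinom, ← pow_mul_pow_sub t hkn]
  field_simp

theorem stmt2_general (q x y a t : ℂ) (hq1 : ‖q‖ < 1) (hxt : ‖x * t‖ < 1) :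
    ∑' n : ℕ, ascU q x y a n * t ^ n / qPoch q q n =
      qPochInf q (a * t) * qPochInf q (y * t) / qPochInf q (x * t) := by
  simp_rw [ascU_mul_pow_div hq1]
  rw [← tsum_mul_tsum_eq_tsum_sum_range_of_summable_norm
    (summable_norm_cauchyGenTerm hq1 (by simp) a) (summable_norm_cauchyGenTerm hq1 hxt y),
    ← cauchyGen, ← cauchyGen, cauchyGen_zero_left hq1, cauchyGen_eq hq1 hxt, mul_div_assoc]

theorem stmt2 (q x y a t : ℂ) (hq0 : 0 < ‖q‖) (hq1 : ‖q‖ < 1) (hxt : ‖x * t‖ < 1) :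
    ∑' n : ℕ, ascU q x y a n * t ^ n / qPoch q q n =
      qPochInf q (a * t) * qPochInf q (y * t) / qPochInf q (x * t) :=
  stmt2_general q x y a t hq1 hxt
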